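/- arXiv:1409.6240 — 4 statements merged into one kernel-verified Lean document; each statement's English description precedes it below -/
import Mathlib

section
/- Let ξ : ℤ → {−1,0,1} be a configuration, l ≥ 1 an integer, m ≤ n integers, and suppose ξ has a maximal (l+1)-run of sign s at a within [m,n]. If x is an endpoint of this run (x = a or x = a+l), then changing the value at x to 0 creates exactly one new counted l-run: g^l_{m,n}(ξ^{x→0}) = g^l_{m,n}(ξ) + 1. -/
/-- `ξ` has a maximal `l`-run of sign `s` at `a` within `[m, n]`:
`ξ (a+i) = s` for `0 ≤ i ≤ l-1`, `ξ (a-1) ≠ s`, `ξ (a+l) ≠ s`, `m ≤ a`, `a+l-1 ≤ n`. -/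
def IsMaxRun (ξ : ℤ → ℤ) (l m n a s : ℤ) : Prop :=
  (∀ i : ℤ, 0 ≤ i → i ≤ l - 1 → ξ (a + i) = s) ∧
    ξ (a - 1) ≠ s ∧ ξ (a + l) ≠ s ∧ m ≤ a ∧ a + l - 1 ≤ n

/-- `g^l_{m,n}(ξ)`: the number of pairs `(a, s)` with `s ∈ {−1, 1}` such that
`ξ` has a maximal `l`-run of sign `s` at `a` within `[m, n]`. -/
noncomputable def runCount (l m n : ℤ) (ξ : ℤ → ℤ) : ℕ :=
  Set.ncard {p : ℤ × ℤ | (p.2 = 1 ∨ p.2 = -1) ∧ IsMaxRun ξ l m n p.1 p.2}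

lemma runSet_finite (ξ : ℤ → ℤ) (l m n : ℤ) :
    {p : ℤ × ℤ | (p.2 = 1 ∨ p.2 = -1) ∧ IsMaxRun ξ l m n p.1 p.2}.Finite := by
  apply Set.Finite.subset ((Set.finite_Icc m (n - l + 1)).prod (Set.toFinite ({1, -1} : Set ℤ)))
  rintro ⟨b, t⟩ ⟨ht, _, _, _, h4, h5⟩
  exact ⟨Set.mem_Icc.2 ⟨h4, by linarith⟩, ht⟩

theorem runCount_update_zero (ξ : ℤ → ℤ) (hξ : ∀ x, ξ x = -1 ∨ ξ x = 0 ∨ ξ x = 1)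
    (l m n a s : ℤ) (hl : 1 ≤ l) (hmn : m ≤ n) (hs : s = 1 ∨ s = -1)
    (hrun : IsMaxRun ξ (l + 1) m n a s)
    (x : ℤ) (hx : x = a ∨ x = a + l) :
    runCount l m n (Function.update ξ x 0) = runCount l m n ξ + 1 := by
  obtain ⟨h1, h2, h3, hma, hln⟩ := hrun
  have h1' : ∀ i : ℤ, 0 ≤ i → i ≤ l → ξ (a + i) = s := fun i hi hi' => h1 i hi (by linarith)
  have hξa : ξ a = s := by simpa using h1' 0 le_rfl (by linarith)
  have hξal : ξ (a + l) = s := h1' l (by linarith) le_rfl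
  have h3' : ξ (a + l + 1) ≠ s := by
    have : a + (l + 1) = a + l + 1 := by ring
    rwa [this] at h3
  have hln' : a + l ≤ n := by linarith
  have hs0 : (0 : ℤ) ≠ s := by rcases hs with h | h <;> simp [h]
  have hfin := runSet_finite ξ l m n
  rcases hx with h | h <;> rw [h]
  · -- x = a : the new run is (a+1, s)
    have hnot : (a + 1, s) ∉
        {p : ℤ × ℤ | (p.2 = 1 ∨ p.2 = -1) ∧ IsMaxRun ξ l m n p.1 p.2} := by
      rintro ⟨-, -, hb, -⟩
      exact hb (by rwa [show a + 1 - 1 = a by ring])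
    have hset : {p : ℤ × ℤ |
          (p.2 = 1 ∨ p.2 = -1) ∧ IsMaxRun (Function.update ξ a 0) l m n p.1 p.2}
        = insert (a + 1, s)
            {p : ℤ × ℤ | (p.2 = 1 ∨ p.2 = -1) ∧ IsMaxRun ξ l m n p.1 p.2} := by
      ext ⟨b, t⟩
      simp only [Set.mem_setOf_eq, Set.mem_insert_iff, Prod.mk.injEq]
      constructor
      · rintro ⟨ht, hr1, hr2, hr3, hr4, hr5⟩
        by_cases hq : b = a + 1 ∧ t = s
        · exact Or.inl hq
        refine Or.inr ⟨ht, ?_, ?_, ?_, hr4, hr5⟩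
        · intro i hi hi'
          have hne : b + i ≠ a := by
            intro h
            have h' := hr1 i hi hi'
            rw [h, Function.update_self] at h'
            rcases ht with h'' | h'' <;> omega
          have := hr1 i hi hi'
          rwa [Function.update_of_ne hne] at this
        · by_cases hba : b - 1 = a
          · have hts : t ≠ s := fun h => hq ⟨by omega, h⟩
            rw [hba, hξa]
            exact fun h => hts h.symm
          · have := hr2
            rwa [Function.update_of_ne hba] at this
        · by_cases hba : b + l = a
          · have hts : t ≠ s := by
              intro h; subst h
              have h' := hr1 (l - 1) (by linarith) (by linarith)
              rw [Function.update_of_ne (show b + (l - 1) ≠ a by omega),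
                show b + (l - 1) = a - 1 by omega] at h'
              exact h2 h'
            rw [hba, hξa]
            exact fun h => hts h.symm
          · have := hr3
            rwa [Function.update_of_ne hba] at this
      · rintro (⟨rfl, rfl⟩ | ⟨ht, hr1, hr2, hr3, hr4, hr5⟩)
        · refine ⟨hs, ?_, ?_, ?_, by omega, by omega⟩
          · intro i hi hi'
            rw [Function.update_of_ne (show a + 1 + i ≠ a by omega),
              show a + 1 + i = a + (i + 1) by ring]
            exact h1' (i + 1) (by omega) (by omega)
          · rw [show a + 1 - 1 = a by ring, Function.update_self]
            exact hs0
          · rw [Function.update_of_ne (show a + 1 + l ≠ a by omega),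
              show a + 1 + l = a + l + 1 by ring]
            exact h3'
        · have hcov : ¬ (b ≤ a ∧ a ≤ b + l - 1) := by
            rintro ⟨hba, hab⟩
            have hts : t = s := by
              have h := hr1 (a - b) (by omega) (by omega)
              rw [show b + (a - b) = a by ring, hξa] at h
              exact h.symm
            have h := h1' (b + l - a) (by omega) (by omega)
            rw [show a + (b + l - a) = b + l by ring] at h
            exact absurd (h.trans hts.symm) hr3
          refine ⟨ht, ?_, ?_, ?_, hr4, hr5⟩
          · intro i hi hi'
            rw [Function.update_of_ne (show b + i ≠ a by omega)]
            exact hr1 i hi hi'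
          · by_cases hba : b - 1 = a
            · rw [hba, Function.update_self]
              rcases ht with h | h <;> omega
            · rw [Function.update_of_ne hba]
              exact hr2
          · by_cases hba : b + l = a
            · rw [hba, Function.update_self]
              rcases ht with h | h <;> omega
            · rw [Function.update_of_ne hba]
              exact hr3
    rw [runCount, runCount, hset, Set.ncard_insert_of_notMem hnot hfin]
  · -- x = a + l : the new run is (a, s)
    have hnot : (a, s) ∉
        {p : ℤ × ℤ | (p.2 = 1 ∨ p.2 = -1) ∧ IsMaxRun ξ l m n p.1 p.2} := by
      rintro ⟨-, -, -, hb, -⟩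
      exact hb hξal
    have hset : {p : ℤ × ℤ |
          (p.2 = 1 ∨ p.2 = -1) ∧ IsMaxRun (Function.update ξ (a + l) 0) l m n p.1 p.2}
        = insert (a, s)
            {p : ℤ × ℤ | (p.2 = 1 ∨ p.2 = -1) ∧ IsMaxRun ξ l m n p.1 p.2} := by
      ext ⟨b, t⟩
      simp only [Set.mem_setOf_eq, Set.mem_insert_iff, Prod.mk.injEq]
      constructor
      · rintro ⟨ht, hr1, hr2, hr3, hr4, hr5⟩
        by_cases hq : b = a ∧ t = s
        · exact Or.inl hq
        refine Or.inr ⟨ht, ?_, ?_, ?_, hr4, hr5⟩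
        · intro i hi hi'
          have hne : b + i ≠ a + l := by
            intro h
            have h' := hr1 i hi hi'
            rw [h, Function.update_self] at h'
            rcases ht with h'' | h'' <;> omega
          have := hr1 i hi hi'
          rwa [Function.update_of_ne hne] at this
        · by_cases hba : b - 1 = a + l
          · have hts : t ≠ s := by
              intro h; subst h
              have h' := hr1 0 le_rfl (by linarith)
              rw [Function.update_of_ne (show b + 0 ≠ a + l by omega),
                show b + 0 = a + l + 1 by omega] at h'
              exact h3' h'
            rw [hba, hξal]
            exact fun h => hts h.symm
          · have := hr2
            rwa [Function.update_of_ne hba] at this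
        · by_cases hba : b + l = a + l
          · have hts : t ≠ s := fun h => hq ⟨by omega, h⟩
            rw [hba, hξal]
            exact fun h => hts h.symm
          · have := hr3
            rwa [Function.update_of_ne hba] at this
      · rintro (⟨rfl, rfl⟩ | ⟨ht, hr1, hr2, hr3, hr4, hr5⟩)
        · refine ⟨hs, ?_, ?_, ?_, hma, by omega⟩
          · intro i hi hi'
            rw [Function.update_of_ne (show b + i ≠ b + l by omega)]
            exact h1' i hi (by omega)
          · rw [Function.update_of_ne (show b - 1 ≠ b + l by omega)]
            exact h2
          · rw [Function.update_self]
            exact hs0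
        · have hcov : ¬ (b ≤ a + l ∧ a + l ≤ b + l - 1) := by
            rintro ⟨hba, hab⟩
            have hts : t = s := by
              have h := hr1 (a + l - b) (by omega) (by omega)
              rw [show b + (a + l - b) = a + l by ring, hξal] at h
              exact h.symm
            have h := h1' (b - 1 - a) (by omega) (by omega)
            rw [show a + (b - 1 - a) = b - 1 by ring] at h
            exact absurd (h.trans hts.symm) hr2
          refine ⟨ht, ?_, ?_, ?_, hr4, hr5⟩
          · intro i hi hi'
            rw [Function.update_of_ne (show b + i ≠ a + l by omega)]
            exact hr1 i hi hi'
          · by_cases hba : b - 1 = a + l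
            · rw [hba, Function.update_self]
              rcases ht with h | h <;> omega
            · rw [Function.update_of_ne hba]
              exact hr2
          · by_cases hba : b + l = a + l
            · rw [hba, Function.update_self]
              rcases ht with h | h <;> omega
            · rw [Function.update_of_ne hba]
              exact hr3
    rw [runCount, runCount, hset, Set.ncard_insert_of_notMem hnot hfin]
end

section
/- Let ξ : ℤ → {−1,0,1} be a configuration, l ≥ 1 an integer, m ≤ n integers, and suppose ξ has a maximal (l+1)-run of sign s at a within [m,n]. Consider the right endpoint x = a+l (resp. the left endpoint x = a). Then g^l_{m,n}(ξ^{x→−s}) ≥ g^l_{m,n}(ξ) + 1, unless ξ has a maximal l-run of sign −s at a+l+1 within [m,n] (resp. at a−l within [m,n]), in which case still g^l_{m,n}(ξ^{x→−s}) ≥ g^l_{m,n}(ξ). In words: changing an endpoint of a maximal (l+1)-run to the opposite sign creates a counted l-run, and can fail to increase the count only by simultaneously destroying an adjacent counted l-run of the opposite sign. -/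
/-!
Changing the right endpoint `a + l` of a maximal `(l+1)`-run of sign `s` to `-s` leaves a
maximal `l`-run of sign `s` at `a`, which was not counted before. Every other counted run
survives unless it touches the site `a + l`, and the only counted `l`-run that can touch it is
the run of sign `-s` starting at `a + l + 1`. The left endpoint follows by reflecting `ℤ`.
-/

theorem Set.ncard_le_ncard_of_sdiff_singleton_ssubset {α : Type*} {A B : Set α} {d : α}
    (hB : B.Finite) (h : A \ {d} ⊂ B) : A.ncard ≤ B.ncard := by
  have := Set.ncard_lt_ncard h hB
  have := Set.pred_ncard_le_ncard_sdiff_singleton A d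
  omega

def runSet (l m n : ℤ) (ξ : ℤ → ℤ) : Set (ℤ × ℤ) :=
  {p : ℤ × ℤ | (p.2 = 1 ∨ p.2 = -1) ∧ IsMaxRun ξ l m n p.1 p.2}

theorem runCount_eq_ncard_runSet (l m n : ℤ) (ξ : ℤ → ℤ) :
    runCount l m n ξ = (runSet l m n ξ).ncard := rfl

theorem runSet_finite_s3 (l m n : ℤ) (ξ : ℤ → ℤ) : (runSet l m n ξ).Finite := by
  refine ((Set.finite_Icc m (n - l + 1)).prod (Set.toFinite {1, -1})).subset ?_
  rintro ⟨b, t⟩ ⟨ht, -, -, -, hm, hn⟩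
  exact ⟨⟨hm, by omega⟩, ht⟩

namespace IsMaxRun

variable {ξ : ℤ → ℤ} {l m n a s : ℤ}

theorem update_of_lt_or_lt (h : IsMaxRun ξ l m n a s) (hl : 0 ≤ l) {x : ℤ}
    (hx : x < a - 1 ∨ a + l < x) (v : ℤ) : IsMaxRun (Function.update ξ x v) l m n a s := by
  obtain ⟨hrun, hleft, hright, hm, hn⟩ := h
  refine ⟨fun i hi0 hi1 => ?_, ?_, ?_, hm, hn⟩
  · rw [Function.update_of_ne (by omega)]; exact hrun i hi0 hi1
  · rw [Function.update_of_ne (by omega)]; exact hleft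
  · rw [Function.update_of_ne (by omega)]; exact hright

theorem update_last (h : IsMaxRun ξ (l + 1) m n a s) (hl : 0 ≤ l) {v : ℤ} (hv : v ≠ s) :
    IsMaxRun (Function.update ξ (a + l) v) l m n a s := by
  obtain ⟨hrun, hleft, -, hm, hn⟩ := h
  refine ⟨fun i hi0 hi1 => ?_, ?_, ?_, hm, by omega⟩
  · rw [Function.update_of_ne (by omega)]; exact hrun i hi0 (by omega)
  · rw [Function.update_of_ne (by omega)]; exact hleft
  · rwa [Function.update_self]

theorem eq_next_of_start_mem_Icc (hrun : IsMaxRun ξ (l + 1) m n a s) (hl : 1 ≤ l)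
    (hs : s = 1 ∨ s = -1) {m' n' b t : ℤ} (ht : t = 1 ∨ t = -1) (h : IsMaxRun ξ l m' n' b t)
    (hab : a ≤ b) (hb : b ≤ a + l + 1) : (b, t) = (a + l + 1, -s) := by
  have hξa : ∀ i, 0 ≤ i → i ≤ l → ξ (a + i) = s := fun i hi0 hi1 => hrun.1 i hi0 (by omega)
  have hξb : ξ b = t := by simpa using h.1 0 le_rfl (by omega)
  obtain rfl | hb := eq_or_lt_of_le hb
  · have hts : t ≠ s := by rw [← hξb, add_assoc]; exact hrun.2.2.1
    rw [Prod.mk.injEq]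
    omega
  have hts : t = s := by simpa [← hξb] using hξa (b - a) (by omega) (by omega)
  subst hts
  obtain rfl | hab := eq_or_lt_of_le hab
  · exact absurd (hξa l (by omega) le_rfl) h.2.2.1
  · exact absurd (by simpa using hξa (b - 1 - a) (by omega) (by omega)) h.2.1

theorem comp_neg (h : IsMaxRun ξ l m n a s) :
    IsMaxRun (fun x => ξ (-x)) l (-n) (-m) (-(a + l - 1)) s := by
  obtain ⟨hrun, hleft, hright, hm, hn⟩ := h
  refine ⟨fun i hi0 hi1 => ?_, ?_, ?_, by omega, by omega⟩
  · show ξ (-(-(a + l - 1) + i)) = s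
    rw [show -(-(a + l - 1) + i) = a + (l - 1 - i) by ring]
    exact hrun (l - 1 - i) (by omega) (by omega)
  · show ξ (-(-(a + l - 1) - 1)) ≠ s
    rwa [show -(-(a + l - 1) - 1) = a + l by ring]
  · show ξ (-(-(a + l - 1) + l)) ≠ s
    rwa [show -(-(a + l - 1) + l) = a - 1 by ring]

end IsMaxRun

theorem isMaxRun_comp_neg_iff {ξ : ℤ → ℤ} {l m n b s : ℤ} :
    IsMaxRun (fun x => ξ (-x)) l (-n) (-m) b s ↔ IsMaxRun ξ l m n (-(b + l - 1)) s := by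
  refine ⟨fun h => by simpa only [neg_neg] using h.comp_neg, fun h => ?_⟩
  have := h.comp_neg
  rwa [show -(-(b + l - 1) + l - 1) = b by ring] at this

theorem runCount_comp_neg (l m n : ℤ) (ξ : ℤ → ℤ) :
    runCount l (-n) (-m) (fun x => ξ (-x)) = runCount l m n ξ := by
  let e : ℤ × ℤ → ℤ × ℤ := fun p => (-(p.1 + l - 1), p.2)
  have he : e.Bijective := by
    refine ⟨fun p q hpq => ?_, fun q => ⟨(-q.1 - l + 1, q.2), Prod.ext (by simp only [e]; ring) rfl⟩⟩
    simp only [e, Prod.mk.injEq] at hpq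
    exact Prod.ext (by omega) hpq.2
  have hpre : runSet l (-n) (-m) (fun x => ξ (-x)) = e ⁻¹' runSet l m n ξ := by
    ext p
    simp [runSet, e, isMaxRun_comp_neg_iff]
  rw [runCount_eq_ncard_runSet, runCount_eq_ncard_runSet, hpre,
    Set.ncard_preimage_of_injective_subset_range he.injective (by simp [he.surjective.range_eq])]

theorem runCount_update_right_end {ξ : ℤ → ℤ} {l m n a s : ℤ} (hl : 1 ≤ l)
    (hs : s = 1 ∨ s = -1) (hrun : IsMaxRun ξ (l + 1) m n a s) :
    runCount l m n ξ ≤ runCount l m n (Function.update ξ (a + l) (-s)) ∧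
      (¬ IsMaxRun ξ l m n (a + l + 1) (-s) →
        runCount l m n ξ < runCount l m n (Function.update ξ (a + l) (-s))) := by
  have hns : -s ≠ s := by omega
  have hsub : runSet l m n ξ \ {(a + l + 1, -s)} ⊂
      runSet l m n (Function.update ξ (a + l) (-s)) := by
    refine Set.ssubset_iff_exists.2 ⟨?_, (a, s), ⟨hs, hrun.update_last (by omega) hns⟩, ?_⟩
    · rintro ⟨b, t⟩ ⟨⟨ht, hbt⟩, hne⟩
      refine ⟨ht, hbt.update_of_lt_or_lt (by omega) ?_ _⟩
      by_contra! hnear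
      exact hne (hrun.eq_next_of_start_mem_Icc hl hs ht hbt (by omega) (by omega))
    · exact fun h => h.1.2.2.2.1 (hrun.1 l (by omega) (by omega))
  have hfin := runSet_finite_s3 l m n (Function.update ξ (a + l) (-s))
  refine ⟨Set.ncard_le_ncard_of_sdiff_singleton_ssubset hfin hsub, fun hnext => ?_⟩
  rw [Set.sdiff_singleton_eq_self fun h => hnext h.2] at hsub
  exact Set.ncard_lt_ncard hsub hfin

theorem runCount_update_left_end {ξ : ℤ → ℤ} {l m n a s : ℤ} (hl : 1 ≤ l)
    (hs : s = 1 ∨ s = -1) (hrun : IsMaxRun ξ (l + 1) m n a s) :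
    runCount l m n ξ ≤ runCount l m n (Function.update ξ a (-s)) ∧
      (¬ IsMaxRun ξ l m n (a - l) (-s) →
        runCount l m n ξ < runCount l m n (Function.update ξ a (-s))) := by
  have hrefl : IsMaxRun (fun x => ξ (-x)) (l + 1) (-n) (-m) (-(a + l)) s :=
    isMaxRun_comp_neg_iff.2 (by rwa [show -(-(a + l) + (l + 1) - 1) = a by ring])
  have hupdate : (fun x => Function.update ξ a (-s) (-x)) =
      Function.update (fun x => ξ (-x)) (-(a + l) + l) (-s) := by
    simpa using Function.update_comp_eq_of_injective' ξ neg_injective (-a) (-s)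
  have key := runCount_update_right_end hl hs hrefl
  rw [← hupdate, runCount_comp_neg, runCount_comp_neg, isMaxRun_comp_neg_iff] at key
  rwa [show -(-(a + l) + l + 1 + l - 1) = a - l by ring] at key

theorem runCount_update_oppSign_general (ξ : ℤ → ℤ)
    (l m n a s : ℤ) (hl : 1 ≤ l) (hs : s = 1 ∨ s = -1)
    (hrun : IsMaxRun ξ (l + 1) m n a s) :
    (runCount l m n (Function.update ξ (a + l) (-s)) ≥ runCount l m n ξ ∧
      (¬ IsMaxRun ξ l m n (a + l + 1) (-s) →
        runCount l m n (Function.update ξ (a + l) (-s)) ≥ runCount l m n ξ + 1)) ∧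
    (runCount l m n (Function.update ξ a (-s)) ≥ runCount l m n ξ ∧
      (¬ IsMaxRun ξ l m n (a - l) (-s) →
        runCount l m n (Function.update ξ a (-s)) ≥ runCount l m n ξ + 1)) :=
  ⟨runCount_update_right_end hl hs hrun, runCount_update_left_end hl hs hrun⟩

theorem runCount_update_oppSign (ξ : ℤ → ℤ) (hξ : ∀ x, ξ x = -1 ∨ ξ x = 0 ∨ ξ x = 1)
    (l m n a s : ℤ) (hl : 1 ≤ l) (hmn : m ≤ n) (hs : s = 1 ∨ s = -1)
    (hrun : IsMaxRun ξ (l + 1) m n a s) :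
    (runCount l m n (Function.update ξ (a + l) (-s)) ≥ runCount l m n ξ ∧
      (¬ IsMaxRun ξ l m n (a + l + 1) (-s) →
        runCount l m n (Function.update ξ (a + l) (-s)) ≥ runCount l m n ξ + 1)) ∧
    (runCount l m n (Function.update ξ a (-s)) ≥ runCount l m n ξ ∧
      (¬ IsMaxRun ξ l m n (a - l) (-s) →
        runCount l m n (Function.update ξ a (-s)) ≥ runCount l m n ξ + 1)) :=
  runCount_update_oppSign_general ξ l m n a s hl hs hrun
end

section
/- For every pair of configurations (η, ζ), every integer l ≥ 1 and all integers m ≤ n, the basic-coupling generator applied to the discrepancy-run counter satisfies the corrected estimate Ω̃ g^l_{m,n}(η,ζ) ≥ ε · ( g^{l+1}_{m,n}(η,ζ) − 2 g^l_{m,n}(η,ζ) ) − 4 K l · g^l_{m,n}(η,ζ). -/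
/-- Flip the spin of `η` at site `x`. -/
def flipAt (η : ℤ → Bool) (x : ℤ) : ℤ → Bool := Function.update η x (!η x)

/-- The discrepancy configuration `ξ_{η,ζ}(x) = η(x) − ζ(x)` with values in `{−1,0,1}`. -/
def discrep (η ζ : ℤ → Bool) : ℤ → ℤ :=
  fun x => (if η x then 1 else 0) - (if ζ x then 1 else 0)

/-- `g^l_{m,n}(η, ζ) = g^l_{m,n}(ξ_{η,ζ})`. -/
noncomputable def gPair (l m n : ℤ) (η ζ : ℤ → Bool) : ℕ :=
  runCount l m n (discrep η ζ)

/-- The nearest-neighbor flip rate `c(x, η) = F(η(x−1), η(x), η(x+1))`. -/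
def rate (F : Bool → Bool → Bool → ℝ) (x : ℤ) (η : ℤ → Bool) : ℝ :=
  F (η (x - 1)) (η x) (η (x + 1))

/-- The basic-coupling generator applied to `g^l_{m,n}`, written as a finite
sum over the sites `x ∈ [m−1, n+1]` (flips at other sites do not change `g^l_{m,n}`). -/
noncomputable def omegaG (F : Bool → Bool → Bool → ℝ) (l m n : ℤ) (η ζ : ℤ → Bool) : ℝ :=
  ∑ x ∈ Finset.Icc (m - 1) (n + 1),
    ((min (rate F x η) (rate F x ζ)) *
        ((gPair l m n (flipAt η x) (flipAt ζ x) : ℝ) - (gPair l m n η ζ : ℝ)) +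
      (rate F x η - min (rate F x η) (rate F x ζ)) *
        ((gPair l m n (flipAt η x) ζ : ℝ) - (gPair l m n η ζ : ℝ)) +
      (rate F x ζ - min (rate F x η) (rate F x ζ)) *
        ((gPair l m n η (flipAt ζ x) : ℝ) - (gPair l m n η ζ : ℝ)))

/-!
Write `ξ = η − ζ`. Changing `ξ` at a single site `x` can destroy only those maximal `l`-runs
`[a, a+l-1]` with `a - 1 ≤ x ≤ a + l`; call their number `D_x`. A joint flip of `η` and `ζ` at the
first site `x` of a maximal `(l+1)`-run negates `ξ x` and thereby creates a new maximal `l`-run at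
`x + 1`. In the basic coupling the joint rate at `x` is at least `ε` and the three rates add up to
`max (c(x,η)) (c(x,ζ)) ≤ K`, so the `x`-th term of `Ω̃ g^l` is at least
`ε · [x starts an (l+1)-run] − K · D_x`. Summing over `x`, and double counting `Σ_x D_x ≤ (l+2) g^l`
(a run has `l + 2` neighbouring sites), gives `Ω̃ g^l ≥ ε g^{l+1} − K (l+2) g^l`, which implies the
claim because `l + 2 ≤ 3 l`.
-/

open Finset

open Classical in
noncomputable def runFinset (l m n : ℤ) (ξ : ℤ → ℤ) : Finset (ℤ × ℤ) :=
  (Icc m (n + 1 - l) ×ˢ {1, -1}).filter fun p => IsMaxRun ξ l m n p.1 p.2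

noncomputable def runsNear (l m n x : ℤ) (ξ : ℤ → ℤ) : Finset (ℤ × ℤ) :=
  (runFinset l m n ξ).filter fun p => p.1 - 1 ≤ x ∧ x ≤ p.1 + l

noncomputable def runsFar (l m n x : ℤ) (ξ : ℤ → ℤ) : Finset (ℤ × ℤ) :=
  (runFinset l m n ξ).filter fun p => ¬(p.1 - 1 ≤ x ∧ x ≤ p.1 + l)

noncomputable def runStarts (l m n : ℤ) (ξ : ℤ → ℤ) : Finset ℤ :=
  (runFinset l m n ξ).image Prod.fst

section Runs

variable {l m n a s x : ℤ} {ξ ξ' : ℤ → ℤ}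

lemma mem_runFinset {p : ℤ × ℤ} :
    p ∈ runFinset l m n ξ ↔ (p.2 = 1 ∨ p.2 = -1) ∧ IsMaxRun ξ l m n p.1 p.2 := by
  simp only [runFinset, mem_filter, mem_product, mem_Icc, mem_insert, mem_singleton]
  constructor
  · rintro ⟨⟨-, hs⟩, hr⟩
    exact ⟨hs, hr⟩
  · rintro ⟨hs, hr⟩
    exact ⟨⟨⟨hr.2.2.2.1, by linarith [hr.2.2.2.2]⟩, hs⟩, hr⟩

lemma runCount_eq_card_runFinset : runCount l m n ξ = #(runFinset l m n ξ) := by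
  rw [runCount, ← Set.ncard_coe_finset]
  congr 1
  ext p
  exact mem_runFinset.symm

lemma IsMaxRun.of_eq_off (hl : 0 ≤ l) (hr : IsMaxRun ξ l m n a s)
    (hξ : ∀ y ≠ x, ξ' y = ξ y) (hx : ¬(a - 1 ≤ x ∧ x ≤ a + l)) :
    IsMaxRun ξ' l m n a s := by
  obtain ⟨hrun, hleft, hright, hm, hn⟩ := hr
  refine ⟨fun i hi hi' => ?_, ?_, ?_, hm, hn⟩
  · rw [hξ _ (by omega)]; exact hrun i hi hi'
  · rwa [hξ _ (by omega)]
  · rwa [hξ _ (by omega)]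

lemma IsMaxRun.tail (hl : 0 ≤ l) (hr : IsMaxRun ξ (l + 1) m n x s)
    (hξ : ∀ y ≠ x, ξ' y = ξ y) (hx : ξ' x ≠ s) :
    IsMaxRun ξ' l m n (x + 1) s := by
  obtain ⟨hrun, -, hright, hm, hn⟩ := hr
  refine ⟨fun i hi hi' => ?_, by simpa using hx, ?_, by omega, by omega⟩
  · rw [hξ _ (by omega), add_assoc, add_comm 1]
    exact hrun (i + 1) (by omega) (by omega)
  · rw [hξ _ (by omega), add_assoc, add_comm 1]
    exact hright

lemma runsFar_subset_runFinset (hl : 0 ≤ l) (hξ : ∀ y ≠ x, ξ' y = ξ y) :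
    runsFar l m n x ξ ⊆ runFinset l m n ξ' := by
  intro p hp
  obtain ⟨hp, hx⟩ := mem_filter.1 hp
  obtain ⟨hs, hr⟩ := mem_runFinset.1 hp
  exact mem_runFinset.2 ⟨hs, hr.of_eq_off hl hξ hx⟩

lemma card_runsNear_add_card_runsFar (x : ℤ) :
    #(runsNear l m n x ξ) + #(runsFar l m n x ξ) = #(runFinset l m n ξ) :=
  card_filter_add_card_filter_not _

lemma runCount_le_add_card_runsNear (hl : 0 ≤ l) (hξ : ∀ y ≠ x, ξ' y = ξ y) :
    runCount l m n ξ ≤ runCount l m n ξ' + #(runsNear l m n x ξ) := by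
  rw [runCount_eq_card_runFinset, runCount_eq_card_runFinset, ← card_runsNear_add_card_runsFar x, add_comm]
  exact Nat.add_le_add_right (card_le_card (runsFar_subset_runFinset hl hξ)) _

lemma runCount_add_one_le_add_card_runsNear (hl : 0 ≤ l) (hs : s = 1 ∨ s = -1)
    (hr : IsMaxRun ξ (l + 1) m n x s) (hξ : ∀ y ≠ x, ξ' y = ξ y) (hx : ξ' x ≠ s) :
    runCount l m n ξ + 1 ≤ runCount l m n ξ' + #(runsNear l m n x ξ) := by
  rw [runCount_eq_card_runFinset, runCount_eq_card_runFinset, ← card_runsNear_add_card_runsFar x]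
  suffices h : #(runsFar l m n x ξ) + 1 ≤ #(runFinset l m n ξ') by omega
  rw [← card_insert_of_notMem (a := (x + 1, s))
    fun h => (mem_filter.1 (h : _ ∈ runsFar l m n x ξ)).2 ⟨by omega, by omega⟩]
  refine card_le_card (insert_subset ?_ (runsFar_subset_runFinset hl hξ))
  exact mem_runFinset.2 ⟨hs, hr.tail hl hξ hx⟩

lemma card_runStarts (hl : 1 ≤ l) : #(runStarts l m n ξ) = runCount l m n ξ := by
  rw [runStarts, runCount_eq_card_runFinset]
  refine card_image_of_injOn fun p hp q hq hpq => Prod.ext hpq ?_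
  have hp0 := (mem_runFinset.1 hp).2.1 0 le_rfl (by omega)
  have hq0 := (mem_runFinset.1 hq).2.1 0 le_rfl (by omega)
  simp only [add_zero] at hp0 hq0
  rw [← hp0, ← hq0, hpq]

lemma runStarts_subset_Icc : runStarts l m n ξ ⊆ Icc m (n + 1 - l) := by
  intro a ha
  obtain ⟨p, hp, rfl⟩ := mem_image.1 ha
  obtain ⟨-, -, -, -, hm, hn⟩ := mem_runFinset.1 hp
  exact mem_Icc.2 ⟨hm, by omega⟩

lemma sum_card_runsNear_le (X : Finset ℤ) :
    ∑ x ∈ X, #(runsNear l m n x ξ) ≤ (l + 2).toNat * runCount l m n ξ := by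
  let near : ℤ → ℤ × ℤ → Prop := fun x p => p.1 - 1 ≤ x ∧ x ≤ p.1 + l
  calc ∑ x ∈ X, #(runsNear l m n x ξ)
      = ∑ x ∈ X, #((runFinset l m n ξ).bipartiteAbove near x) := rfl
    _ = ∑ p ∈ runFinset l m n ξ, #(X.bipartiteBelow near p) :=
        sum_card_bipartiteAbove_eq_sum_card_bipartiteBelow near
    _ ≤ #(runFinset l m n ξ) • (l + 2).toNat := by
        refine sum_le_card_nsmul _ _ _ fun p _ => ?_
        calc #(X.bipartiteBelow near p) ≤ #(Icc (p.1 - 1) (p.1 + l)) :=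
              card_le_card fun y hy => mem_Icc.2 (mem_bipartiteBelow near |>.1 hy).2
          _ = (l + 2).toNat := by rw [Int.card_Icc]; congr 1; ring
    _ = (l + 2).toNat * runCount l m n ξ := by
        rw [smul_eq_mul, mul_comm, runCount_eq_card_runFinset]

end Runs

section Flips

variable {l m n x : ℤ} {η ζ : ℤ → Bool}

lemma flipAt_of_ne {y : ℤ} (h : y ≠ x) : flipAt η x y = η y :=
  Function.update_of_ne h _ _

lemma discrep_flipAt_left_of_ne {y : ℤ} (h : y ≠ x) :
    discrep (flipAt η x) ζ y = discrep η ζ y := by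
  simp only [discrep, flipAt_of_ne h]

lemma discrep_flipAt_right_of_ne {y : ℤ} (h : y ≠ x) :
    discrep η (flipAt ζ x) y = discrep η ζ y := by
  simp only [discrep, flipAt_of_ne h]

lemma discrep_flipAt_flipAt_of_ne {y : ℤ} (h : y ≠ x) :
    discrep (flipAt η x) (flipAt ζ x) y = discrep η ζ y := by
  simp only [discrep, flipAt_of_ne h]

lemma discrep_flipAt_flipAt_self : discrep (flipAt η x) (flipAt ζ x) x = -discrep η ζ x := by
  simp only [discrep, flipAt, Function.update_self]
  cases η x <;> cases ζ x <;> norm_num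

lemma gPair_sub_le_gPair_flipAt_left (hl : 0 ≤ l) :
    (gPair l m n η ζ : ℝ) - #(runsNear l m n x (discrep η ζ)) ≤ gPair l m n (flipAt η x) ζ := by
  rw [sub_le_iff_le_add]
  exact_mod_cast runCount_le_add_card_runsNear hl fun _ => discrep_flipAt_left_of_ne

lemma gPair_sub_le_gPair_flipAt_right (hl : 0 ≤ l) :
    (gPair l m n η ζ : ℝ) - #(runsNear l m n x (discrep η ζ)) ≤ gPair l m n η (flipAt ζ x) := by
  rw [sub_le_iff_le_add]
  exact_mod_cast runCount_le_add_card_runsNear hl fun _ => discrep_flipAt_right_of_ne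

lemma gPair_add_sub_le_gPair_flipAt_flipAt (hl : 0 ≤ l) :
    (gPair l m n η ζ : ℝ) + (if x ∈ runStarts (l + 1) m n (discrep η ζ) then 1 else 0)
        - #(runsNear l m n x (discrep η ζ)) ≤ gPair l m n (flipAt η x) (flipAt ζ x) := by
  rw [sub_le_iff_le_add]
  split_ifs with hx
  · obtain ⟨⟨a, s⟩, hp, rfl⟩ := mem_image.1 hx
    obtain ⟨hs, hr⟩ := mem_runFinset.1 hp
    have hξa : discrep η ζ a = s := by simpa using hr.1 0 le_rfl (by omega)
    have hneg : discrep (flipAt η a) (flipAt ζ a) a ≠ s := by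
      rw [discrep_flipAt_flipAt_self, hξa]
      omega
    exact_mod_cast runCount_add_one_le_add_card_runsNear hl hs hr
      (fun _ => discrep_flipAt_flipAt_of_ne) hneg
  · rw [add_zero]
    exact_mod_cast runCount_le_add_card_runsNear hl fun _ => discrep_flipAt_flipAt_of_ne

end Flips

lemma coupling_term_ge {ε K a b i d g g₀ g₁ g₂ : ℝ} (hε : 0 ≤ ε) (ha : ε ≤ a) (ha' : a ≤ K)
    (hb : ε ≤ b) (hb' : b ≤ K) (hi : 0 ≤ i) (hd : 0 ≤ d) (h₀ : g + i - d ≤ g₀)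
    (h₁ : g - d ≤ g₁) (h₂ : g - d ≤ g₂) :
    ε * i - K * d ≤ min a b * (g₀ - g) + (a - min a b) * (g₁ - g) + (b - min a b) * (g₂ - g) := by
  have hmin : ε ≤ min a b := le_min ha hb
  have hmax : a + b - min a b ≤ K := by
    rcases le_total a b with h | h
    · rw [min_eq_left h]; linarith
    · rw [min_eq_right h]; linarith
  have e₀ : min a b * (i - d) ≤ min a b * (g₀ - g) :=
    mul_le_mul_of_nonneg_left (by linarith) (hε.trans hmin)
  have e₁ : (a - min a b) * -d ≤ (a - min a b) * (g₁ - g) :=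
    mul_le_mul_of_nonneg_left (by linarith) (sub_nonneg.2 (min_le_left a b))
  have e₂ : (b - min a b) * -d ≤ (b - min a b) * (g₂ - g) :=
    mul_le_mul_of_nonneg_left (by linarith) (sub_nonneg.2 (min_le_right a b))
  nlinarith [mul_le_mul_of_nonneg_right hmin hi, mul_le_mul_of_nonneg_right hmax hd]

theorem generator_estimate_general (F : Bool → Bool → Bool → ℝ) (ε K : ℝ)
    (hε : 0 < ε)
    (hF : ∀ u v w : Bool, ε ≤ F u v w ∧ F u v w ≤ K)
    (l m n : ℤ) (hl : 1 ≤ l) (η ζ : ℤ → Bool) :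
    omegaG F l m n η ζ ≥
      ε * ((gPair (l + 1) m n η ζ : ℝ) - 2 * (gPair l m n η ζ : ℝ)) -
        4 * K * (l : ℝ) * (gPair l m n η ζ : ℝ) := by
  set ξ := discrep η ζ
  set starts := runStarts (l + 1) m n ξ
  have hl₀ : 0 ≤ l := by omega
  have hstarts : ∑ x ∈ Icc (m - 1) (n + 1), (if x ∈ starts then (1 : ℝ) else 0) =
      gPair (l + 1) m n η ζ := by
    rw [sum_ite_mem, inter_eq_right.2 (runStarts_subset_Icc.trans (Icc_subset_Icc (by omega)
      (by omega))), sum_const, nsmul_one, card_runStarts (by omega)]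
    rfl
  have hnear : ∑ x ∈ Icc (m - 1) (n + 1), (#(runsNear l m n x ξ) : ℝ) ≤
      (l + 2) * gPair l m n η ζ := by
    have hl₂ : (((l + 2).toNat : ℕ) : ℝ) = l + 2 := by exact_mod_cast Int.toNat_of_nonneg (by omega)
    rw [← hl₂]
    exact_mod_cast sum_card_runsNear_le (Icc (m - 1) (n + 1))
  have hK : ε ≤ K := (hF true true true).1.trans (hF true true true).2
  have hg : (0 : ℝ) ≤ gPair l m n η ζ := Nat.cast_nonneg _
  calc omegaG F l m n η ζ
      ≥ ∑ x ∈ Icc (m - 1) (n + 1),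
          (ε * (if x ∈ starts then 1 else 0) - K * #(runsNear l m n x ξ)) :=
        sum_le_sum fun x _ => coupling_term_ge hε.le (hF _ _ _).1 (hF _ _ _).2 (hF _ _ _).1
          (hF _ _ _).2 (by split_ifs <;> norm_num) (Nat.cast_nonneg _)
          (gPair_add_sub_le_gPair_flipAt_flipAt hl₀) (gPair_sub_le_gPair_flipAt_left hl₀)
          (gPair_sub_le_gPair_flipAt_right hl₀)
    _ = ε * gPair (l + 1) m n η ζ -
          K * ∑ x ∈ Icc (m - 1) (n + 1), (#(runsNear l m n x ξ) : ℝ) := by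
        rw [sum_sub_distrib, ← mul_sum, ← mul_sum, hstarts]
    _ ≥ ε * gPair (l + 1) m n η ζ - K * ((l + 2) * gPair l m n η ζ) := by gcongr; linarith
    _ ≥ _ := by
        have hlR : (0 : ℝ) ≤ 3 * l - 2 := by
          have : (1 : ℝ) ≤ l := by exact_mod_cast hl
          linarith
        nlinarith [mul_nonneg (mul_nonneg (hε.le.trans hK) hg) hlR, mul_nonneg hε.le hg]

theorem generator_estimate (F : Bool → Bool → Bool → ℝ) (ε K : ℝ)
    (hε : 0 < ε) (hεK : ε ≤ K)
    (hF : ∀ u v w : Bool, ε ≤ F u v w ∧ F u v w ≤ K)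
    (l m n : ℤ) (hl : 1 ≤ l) (hmn : m ≤ n) (η ζ : ℤ → Bool) :
    omegaG F l m n η ζ ≥
      ε * ((gPair (l + 1) m n η ζ : ℝ) - 2 * (gPair l m n η ζ : ℝ)) -
        4 * K * (l : ℝ) * (gPair l m n η ζ : ℝ) :=
  generator_estimate_general F ε K hε hF l m n hl η ζ
end

section
/- Let ν be a Borel probability measure on the product space ({0,1}^ℤ) × ({0,1}^ℤ) (product topology) and let l ≥ 1 be an integer. Suppose that ∫ Ω̃ g^l_{m,n} dν = 0 for all integers m ≤ n, and that C := sup over all integers m ≤ n of ∫ g^l_{m,n} dν is finite. Then sup over all integers m ≤ n of ∫ g^{l+1}_{m,n} dν is finite; indeed it is at most (4 K l + 2 ε) C / ε. -/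
namespace SupAux


/-- The finset of maximal `l`-runs. -/
noncomputable def runF (ξ : ℤ → ℤ) (l m n : ℤ) : Finset (ℤ × ℤ) :=
  @Finset.filter _ (fun p => IsMaxRun ξ l m n p.1 p.2) (Classical.decPred _)
    ((Finset.Icc m n) ×ˢ ({1, -1} : Finset ℤ))

lemma mem_runF {ξ : ℤ → ℤ} {l m n a s : ℤ} (hl : 1 ≤ l) :
    (a, s) ∈ runF ξ l m n ↔ (s = 1 ∨ s = -1) ∧ IsMaxRun ξ l m n a s := by
  unfold runF
  rw [@Finset.mem_filter _ _ (Classical.decPred _), Finset.mem_product, Finset.mem_Icc, Finset.mem_insert,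
    Finset.mem_singleton]
  constructor
  · rintro ⟨⟨_, hs⟩, h⟩; exact ⟨hs, h⟩
  · rintro ⟨hs, h⟩
    have h5 := h.2.2.2.2
    have h4 := h.2.2.2.1
    exact ⟨⟨⟨h4, by omega⟩, hs⟩, h⟩

lemma runCount_eq (ξ : ℤ → ℤ) (l m n : ℤ) (hl : 1 ≤ l) :
    runCount l m n ξ = (runF ξ l m n).card := by
  rw [runCount, show {p : ℤ × ℤ | (p.2 = 1 ∨ p.2 = -1) ∧ IsMaxRun ξ l m n p.1 p.2}
      = ↑(runF ξ l m n) from ?_, Set.ncard_coe_finset]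
  ext ⟨a, s⟩
  rw [Set.mem_setOf_eq, Finset.mem_coe, mem_runF hl]

lemma isMaxRun_of_eqOn {ξ ξ' : ℤ → ℤ} {l m n a s : ℤ} (hl : 1 ≤ l)
    (h : ∀ y, a - 1 ≤ y → y ≤ a + l → ξ' y = ξ y)
    (hr : IsMaxRun ξ l m n a s) : IsMaxRun ξ' l m n a s := by
  obtain ⟨h1, h2, h3, h4, h5⟩ := hr
  refine ⟨fun i hi0 hi1 => ?_, ?_, ?_, h4, h5⟩
  · rw [h _ (by omega) (by omega)]; exact h1 i hi0 hi1
  · rw [h _ (by omega) (by omega)]; exact h2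
  · rw [h _ (by omega) (by omega)]; exact h3

lemma destroyed_mem {ξ : ℤ → ℤ} {l m n a s x v : ℤ} (hl : 1 ≤ l)
    (hr : IsMaxRun ξ l m n a s)
    (hr' : ¬ IsMaxRun (Function.update ξ x v) l m n a s) :
    a - 1 ≤ x ∧ x ≤ a + l := by
  by_contra hx
  exact hr' (isMaxRun_of_eqOn hl
    (fun y h1 h2 => Function.update_of_ne (by omega) _ _) hr)

lemma destroyed_boundary {ξ : ℤ → ℤ} {l m n a s x v : ℤ} (hl : 1 ≤ l)
    (hr : IsMaxRun ξ l m n a s) (hx : x = a - 1 ∨ x = a + l)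
    (hr' : ¬ IsMaxRun (Function.update ξ x v) l m n a s) : v = s := by
  by_contra hv
  apply hr'
  obtain ⟨h1, h2, h3, h4, h5⟩ := hr
  refine ⟨fun i hi0 hi1 => ?_, ?_, ?_, h4, h5⟩
  · rw [Function.update_of_ne (by omega)]; exact h1 i hi0 hi1
  · rcases hx with h | h
    · rw [← h, Function.update_self]; exact hv
    · rw [Function.update_of_ne (by omega)]; exact h2
  · rcases hx with h | h
    · rw [Function.update_of_ne (by omega)]; exact h3
    · rw [← h, Function.update_self]; exact hv

lemma created_left {ξ : ℤ → ℤ} {l m n a s : ℤ} (hl : 1 ≤ l) (hs : s = 1 ∨ s = -1)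
    (hr : IsMaxRun ξ (l + 1) m n a s) :
    IsMaxRun (Function.update ξ a (-s)) l (m - 1) (n + 1) (a + 1) s ∧
      ¬ IsMaxRun ξ l (m - 1) (n + 1) (a + 1) s := by
  obtain ⟨h1, h2, h3, h4, h5⟩ := hr
  constructor
  · refine ⟨fun i hi0 hi1 => ?_, ?_, ?_, by omega, by omega⟩
    · rw [Function.update_of_ne (by omega), show a + 1 + i = a + (i + 1) by ring]
      exact h1 (i + 1) (by omega) (by omega)
    · rw [show a + 1 - 1 = a by ring, Function.update_self]; omega
    · rw [Function.update_of_ne (by omega), show a + 1 + l = a + (l + 1) by ring]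
      exact h3
  · rintro ⟨_, hb, _⟩
    apply hb
    rw [show a + 1 - 1 = a by ring, show a = a + 0 by ring]
    exact h1 0 le_rfl (by omega)

lemma created_right {ξ : ℤ → ℤ} {l m n a s : ℤ} (hl : 1 ≤ l) (hs : s = 1 ∨ s = -1)
    (hr : IsMaxRun ξ (l + 1) m n a s) :
    IsMaxRun (Function.update ξ (a + l) (-s)) l (m - 1) (n + 1) a s ∧
      ¬ IsMaxRun ξ l (m - 1) (n + 1) a s := by
  obtain ⟨h1, h2, h3, h4, h5⟩ := hr
  constructor
  · refine ⟨fun i hi0 hi1 => ?_, ?_, ?_, by omega, by omega⟩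
    · rw [Function.update_of_ne (by omega)]
      exact h1 i hi0 (by omega)
    · rw [Function.update_of_ne (by omega)]; exact h2
    · rw [Function.update_self]; omega
  · rintro ⟨_, _, hb, _⟩
    exact hb (h1 l (by omega) (by omega))

lemma end_unique {ξ : ℤ → ℤ} {l m n x : ℤ} (hl : 1 ≤ l) {r1 r2 : ℤ × ℤ}
    (h1 : r1 ∈ runF ξ (l + 1) m n) (h2 : r2 ∈ runF ξ (l + 1) m n)
    (he1 : r1.1 = x ∨ r1.1 + l = x) (he2 : r2.1 = x ∨ r2.1 + l = x) : r1 = r2 := by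
  obtain ⟨a, s⟩ := r1; obtain ⟨b, t⟩ := r2
  obtain ⟨hs, hr⟩ := (mem_runF (by omega)).mp h1
  obtain ⟨ht, hr'⟩ := (mem_runF (by omega)).mp h2
  simp only at he1 he2
  have hsa : ξ a = s := by
    have := hr.1 0 le_rfl (by omega); rwa [add_zero] at this
  have hsb : ξ b = t := by
    have := hr'.1 0 le_rfl (by omega); rwa [add_zero] at this
  have key : a = b := by
    rcases he1 with h | h <;> rcases he2 with h' | h'
    · omega
    · -- a = x, b + l = x
      exfalso
      have e1 : ξ (a - 1) ≠ s := hr.2.1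
      have e2 : ξ (b + (l - 1)) = t := hr'.1 (l - 1) (by omega) (by omega)
      have e3 : ξ (b + l) = t := hr'.1 l (by omega) (by omega)
      have ea : a - 1 = b + (l - 1) := by omega
      have eb : a = b + l := by omega
      rw [ea, e2] at e1
      rw [eb, e3] at hsa
      exact e1 (by omega)
    · exfalso
      have e1 : ξ (b - 1) ≠ t := hr'.2.1
      have e2 : ξ (a + (l - 1)) = s := hr.1 (l - 1) (by omega) (by omega)
      have e3 : ξ (a + l) = s := hr.1 l (by omega) (by omega)
      have ea : b - 1 = a + (l - 1) := by omega
      have eb : b = a + l := by omega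
      rw [ea, e2] at e1
      rw [eb, e3] at hsb
      exact e1 (by omega)
    · omega
  subst key
  have : s = t := by rw [← hsa, hsb]
  rw [this]



def vL (η ζ : ℤ → Bool) (x : ℤ) : ℤ := (if !η x then 1 else 0) - (if ζ x then 1 else 0)
def vR (η ζ : ℤ → Bool) (x : ℤ) : ℤ := (if η x then 1 else 0) - (if !ζ x then 1 else 0)

lemma discrep_flipAt_both (η ζ : ℤ → Bool) (x : ℤ) :
    discrep (flipAt η x) (flipAt ζ x) = Function.update (discrep η ζ) x (-(discrep η ζ x)) := by
  funext y
  by_cases h : y = x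
  · subst h
    simp only [discrep, flipAt, Function.update_self]
    cases η y <;> cases ζ y <;> simp
  · simp only [discrep, flipAt, Function.update_of_ne h]

lemma discrep_flipAt_left (η ζ : ℤ → Bool) (x : ℤ) :
    discrep (flipAt η x) ζ = Function.update (discrep η ζ) x (vL η ζ x) := by
  funext y
  by_cases h : y = x
  · subst h
    simp only [discrep, flipAt, vL, Function.update_self]
  · simp only [discrep, flipAt, Function.update_of_ne h]

lemma discrep_flipAt_right (η ζ : ℤ → Bool) (x : ℤ) :
    discrep η (flipAt ζ x) = Function.update (discrep η ζ) x (vR η ζ x) := by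
  funext y
  by_cases h : y = x
  · subst h
    simp only [discrep, flipAt, vR, Function.update_self]
  · simp only [discrep, flipAt, Function.update_of_ne h]

lemma types_le_one (η ζ : ℤ → Bool) (x s : ℤ) (hs : s = 1 ∨ s = -1)
    (hne : discrep η ζ x ≠ s) :
    (if -(discrep η ζ x) = s then (1:ℕ) else 0)
      + ((if vL η ζ x = s then (1:ℕ) else 0)
      + (if vR η ζ x = s then (1:ℕ) else 0)) ≤ 1 := by
  rcases hs with h | h <;> subst h <;> cases hη : η x <;> cases hζ : ζ x <;>
    simp_all [discrep, vL, vR, hη, hζ]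

/-- created runs count -/
noncomputable def crN (ξ : ℤ → ℤ) (l M N x v : ℤ) : ℕ :=
  ((runF (Function.update ξ x v) l M N) \ (runF ξ l M N)).card

/-- destroyed runs count -/
noncomputable def deN (ξ : ℤ → ℤ) (l M N x v : ℤ) : ℕ :=
  ((runF ξ l M N) \ (runF (Function.update ξ x v) l M N)).card

lemma card_update (ξ : ℤ → ℤ) (l M N x v : ℤ) :
    ((runF (Function.update ξ x v) l M N).card : ℝ) - ((runF ξ l M N).card : ℝ)
      = (crN ξ l M N x v : ℝ) - (deN ξ l M N x v : ℝ) := by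
  have h1 := Finset.card_sdiff_add_card (runF (Function.update ξ x v) l M N) (runF ξ l M N)
  have h2 := Finset.card_sdiff_add_card (runF ξ l M N) (runF (Function.update ξ x v) l M N)
  rw [Finset.union_comm] at h2
  have h3 : crN ξ l M N x v + (runF ξ l M N).card
      = deN ξ l M N x v + (runF (Function.update ξ x v) l M N).card := by
    unfold crN deN; omega
  have := congrArg (fun k : ℕ => (k : ℝ)) h3
  push_cast at this
  linarith



lemma ite_le_one {P : Prop} [Decidable P] : (if P then (1:ℕ) else 0) ≤ 1 := by
  split_ifs <;> omega

lemma ind_mono {P Q : Prop} [Decidable P] [Decidable Q] (h : P → Q) :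
    (if P then (1:ℕ) else 0) ≤ (if Q then 1 else 0) := by
  split_ifs with h1 h2 <;> simp_all

lemma per_run_bound (η ζ : ℤ → Bool) (l M N : ℤ) (hl : 1 ≤ l) {a s : ℤ}
    (hr : (a, s) ∈ runF (discrep η ζ) l M N) :
    ∑ x ∈ Finset.Icc (M - 1) (N + 1),
      ((if (a, s) ∉ runF (Function.update (discrep η ζ) x (-(discrep η ζ x))) l M N then (1:ℕ) else 0)
        + (if (a, s) ∉ runF (Function.update (discrep η ζ) x (vL η ζ x)) l M N then (1:ℕ) else 0)
        + (if (a, s) ∉ runF (Function.update (discrep η ζ) x (vR η ζ x)) l M N then (1:ℕ) else 0))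
      ≤ 3 * l.toNat + 2 := by
  classical
  obtain ⟨hs, hrun⟩ := (mem_runF hl).mp hr
  have hnm : ∀ (x v : ℤ), ((a, s) ∉ runF (Function.update (discrep η ζ) x v) l M N)
      → ¬ IsMaxRun (Function.update (discrep η ζ) x v) l M N a s := by
    intro x v hmemn hbad
    exact hmemn ((mem_runF hl).mpr ⟨hs, hbad⟩)
  have hpt : ∀ x ∈ Finset.Icc (M - 1) (N + 1),
      ((if (a, s) ∉ runF (Function.update (discrep η ζ) x (-(discrep η ζ x))) l M N then (1:ℕ) else 0)
        + (if (a, s) ∉ runF (Function.update (discrep η ζ) x (vL η ζ x)) l M N then (1:ℕ) else 0)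
        + (if (a, s) ∉ runF (Function.update (discrep η ζ) x (vR η ζ x)) l M N then (1:ℕ) else 0))
      ≤ 3 * (if x ∈ Finset.Icc a (a + l - 1) then (1:ℕ) else 0)
        + (if x = a - 1 ∨ x = a + l then (1:ℕ) else 0) := by
    intro x _
    by_cases h1 : x ∈ Finset.Icc a (a + l - 1)
    · rw [if_pos h1]
      refine le_trans (add_le_add (add_le_add ite_le_one ite_le_one) ite_le_one) ?_
      simpa using Nat.le_add_right 3 _
    · by_cases h2 : x = a - 1 ∨ x = a + l
      · rw [if_neg h1, if_pos h2]
        have hne : discrep η ζ x ≠ s := by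
          rcases h2 with h | h
          · rw [h]; exact hrun.2.1
          · rw [h]; exact hrun.2.2.1
        have key := types_le_one η ζ x s hs hne
        refine le_trans (add_le_add (add_le_add
            (ind_mono fun hd => destroyed_boundary hl hrun h2 (hnm _ _ hd))
            (ind_mono fun hd => destroyed_boundary hl hrun h2 (hnm _ _ hd)))
            (ind_mono fun hd => destroyed_boundary hl hrun h2 (hnm _ _ hd))) ?_
        refine le_trans ?_ (le_trans key (by norm_num))
        omega
      · rw [if_neg h1, if_neg h2]
        have hfar : ¬(a - 1 ≤ x ∧ x ≤ a + l) := by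
          rw [Finset.mem_Icc] at h1; omega
        have hz : ∀ v : ℤ,
            (if (a, s) ∉ runF (Function.update (discrep η ζ) x v) l M N then (1:ℕ) else 0) = 0 := by
          intro v
          rw [if_neg]
          intro hmemn
          exact hfar (destroyed_mem hl hrun (hnm x v hmemn))
        rw [hz, hz, hz]
  refine le_trans (Finset.sum_le_sum hpt) ?_
  rw [Finset.sum_add_distrib]
  have e1 : (∑ x ∈ Finset.Icc (M - 1) (N + 1),
      3 * (if x ∈ Finset.Icc a (a + l - 1) then (1:ℕ) else 0)) ≤ 3 * l.toNat := by
    rw [← Finset.mul_sum]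
    apply Nat.mul_le_mul_left
    rw [Finset.sum_ite_mem, Finset.sum_const, smul_eq_mul, mul_one]
    calc (Finset.Icc (M - 1) (N + 1) ∩ Finset.Icc a (a + l - 1)).card
        ≤ (Finset.Icc a (a + l - 1)).card :=
          Finset.card_le_card Finset.inter_subset_right
      _ = l.toNat := by rw [Int.card_Icc]; omega
  have e2 : (∑ x ∈ Finset.Icc (M - 1) (N + 1),
      (if x = a - 1 ∨ x = a + l then (1:ℕ) else 0)) ≤ 2 := by
    rw [← Finset.card_filter]
    refine le_trans (Finset.card_le_card (t := {a - 1, a + l}) ?_) ?_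
    · intro y hy
      rw [Finset.mem_filter] at hy
      simpa using hy.2
    · exact le_trans (Finset.card_insert_le _ _) (by simp)
  omega

lemma destroy_sum_le (η ζ : ℤ → Bool) (l M N : ℤ) (hl : 1 ≤ l) :
    ∑ x ∈ Finset.Icc (M - 1) (N + 1),
      (deN (discrep η ζ) l M N x (-(discrep η ζ x))
        + deN (discrep η ζ) l M N x (vL η ζ x)
        + deN (discrep η ζ) l M N x (vR η ζ x))
      ≤ (runF (discrep η ζ) l M N).card * (3 * l.toNat + 2) := by
  classical
  have hde : ∀ (x w : ℤ), deN (discrep η ζ) l M N x w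
      = ∑ r ∈ runF (discrep η ζ) l M N,
          if r ∉ runF (Function.update (discrep η ζ) x w) l M N then (1:ℕ) else 0 := by
    intro x w
    rw [deN, Finset.sdiff_eq_filter, Finset.card_filter]
  calc ∑ x ∈ Finset.Icc (M - 1) (N + 1),
        (deN (discrep η ζ) l M N x (-(discrep η ζ x))
          + deN (discrep η ζ) l M N x (vL η ζ x)
          + deN (discrep η ζ) l M N x (vR η ζ x))
      = ∑ x ∈ Finset.Icc (M - 1) (N + 1), ∑ r ∈ runF (discrep η ζ) l M N,
          ((if r ∉ runF (Function.update (discrep η ζ) x (-(discrep η ζ x))) l M N then (1:ℕ) else 0)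
            + (if r ∉ runF (Function.update (discrep η ζ) x (vL η ζ x)) l M N then (1:ℕ) else 0)
            + (if r ∉ runF (Function.update (discrep η ζ) x (vR η ζ x)) l M N then (1:ℕ) else 0)) := by
        refine Finset.sum_congr rfl fun x _ => ?_
        rw [hde, hde, hde, ← Finset.sum_add_distrib, ← Finset.sum_add_distrib]
    _ = ∑ r ∈ runF (discrep η ζ) l M N, ∑ x ∈ Finset.Icc (M - 1) (N + 1),
          ((if r ∉ runF (Function.update (discrep η ζ) x (-(discrep η ζ x))) l M N then (1:ℕ) else 0)
            + (if r ∉ runF (Function.update (discrep η ζ) x (vL η ζ x)) l M N then (1:ℕ) else 0)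
            + (if r ∉ runF (Function.update (discrep η ζ) x (vR η ζ x)) l M N then (1:ℕ) else 0)) :=
        Finset.sum_comm
    _ ≤ ∑ _r ∈ runF (discrep η ζ) l M N, (3 * l.toNat + 2) := by
        refine Finset.sum_le_sum fun r hrr => ?_
        obtain ⟨a, s⟩ := r
        exact per_run_bound η ζ l M N hl hrr
    _ = (runF (discrep η ζ) l M N).card * (3 * l.toNat + 2) := by
        rw [Finset.sum_const, smul_eq_mul]

lemma create_sum_ge (η ζ : ℤ → Bool) (l m n : ℤ) (hl : 1 ≤ l) :
    2 * (runF (discrep η ζ) (l + 1) m n).card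
      ≤ ∑ x ∈ Finset.Icc (m - 1 - 1) (n + 1 + 1),
          crN (discrep η ζ) l (m - 1) (n + 1) x (-(discrep η ζ x)) := by
  classical
  have hstep : ∀ x : ℤ, ((runF (discrep η ζ) (l + 1) m n).filter
        (fun r => r.1 = x ∨ r.1 + l = x)).card
      ≤ crN (discrep η ζ) l (m - 1) (n + 1) x (-(discrep η ζ x)) := by
    intro x
    rcases Finset.eq_empty_or_nonempty ((runF (discrep η ζ) (l + 1) m n).filter
        (fun r => r.1 = x ∨ r.1 + l = x)) with he | hne
    · rw [he]; simp
    · obtain ⟨r, hrf⟩ := hne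
      have hone : ((runF (discrep η ζ) (l + 1) m n).filter
          (fun r => r.1 = x ∨ r.1 + l = x)).card ≤ 1 :=
        Finset.card_le_one.mpr (fun r1 h1 r2 h2 => by
          rw [Finset.mem_filter] at h1 h2
          exact end_unique hl h1.1 h2.1 h1.2 h2.2)
      refine le_trans hone ?_
      rw [Finset.mem_filter] at hrf
      obtain ⟨hmem, hend⟩ := hrf
      obtain ⟨a, s⟩ := r
      obtain ⟨hs, hrun⟩ := (mem_runF (by omega : (1:ℤ) ≤ l + 1)).mp hmem
      simp only at hend
      rcases hend with rfl | h
      · -- x = a : left end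
        have hxa : discrep η ζ a = s := by
          have := hrun.1 0 le_rfl (by omega); rwa [add_zero] at this
        have hc := created_left hl hs hrun
        unfold crN
        rw [hxa]
        refine Finset.card_pos.mpr ⟨(a + 1, s), Finset.mem_sdiff.mpr ⟨?_, ?_⟩⟩
        · exact (mem_runF hl).mpr ⟨hs, hc.1⟩
        · intro hb
          exact hc.2 ((mem_runF hl).mp hb).2
      · -- a + l = x : right end
        subst h
        have hxa : discrep η ζ (a + l) = s := hrun.1 l (by omega) (by omega)
        have hc := created_right hl hs hrun
        unfold crN
        rw [hxa]
        refine Finset.card_pos.mpr ⟨(a, s), Finset.mem_sdiff.mpr ⟨?_, ?_⟩⟩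
        · exact (mem_runF hl).mpr ⟨hs, hc.1⟩
        · intro hb
          exact hc.2 ((mem_runF hl).mp hb).2
  have hsum : ∑ x ∈ Finset.Icc (m - 1 - 1) (n + 1 + 1),
      ((runF (discrep η ζ) (l + 1) m n).filter (fun r => r.1 = x ∨ r.1 + l = x)).card
      = 2 * (runF (discrep η ζ) (l + 1) m n).card := by
    have hcf : ∀ x : ℤ, ((runF (discrep η ζ) (l + 1) m n).filter
          (fun r => r.1 = x ∨ r.1 + l = x)).card
        = ∑ r ∈ runF (discrep η ζ) (l + 1) m n,
            if r.1 = x ∨ r.1 + l = x then (1:ℕ) else 0 := fun x => Finset.card_filter _ _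
    rw [Finset.sum_congr rfl (fun x _ => hcf x), Finset.sum_comm]
    have hper : ∀ r ∈ runF (discrep η ζ) (l + 1) m n,
        (∑ x ∈ Finset.Icc (m - 1 - 1) (n + 1 + 1),
          if r.1 = x ∨ r.1 + l = x then (1:ℕ) else 0) = 2 := by
      intro r hrr
      obtain ⟨a, s⟩ := r
      obtain ⟨hs, hrun⟩ := (mem_runF (by omega : (1:ℤ) ≤ l + 1)).mp hrr
      have h4 : m ≤ a := hrun.2.2.2.1
      have h5 : a + (l + 1) - 1 ≤ n := hrun.2.2.2.2
      rw [← Finset.card_filter]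
      have hfe : (Finset.Icc (m - 1 - 1) (n + 1 + 1)).filter
          (fun x => (a, s).1 = x ∨ (a, s).1 + l = x) = {a, a + l} := by
        ext y
        simp only [Finset.mem_filter, Finset.mem_Icc, Finset.mem_insert, Finset.mem_singleton]
        constructor
        · rintro ⟨_, h | h⟩ <;> omega
        · rintro (rfl | rfl)
          · exact ⟨by omega, Or.inl rfl⟩
          · exact ⟨by omega, Or.inr rfl⟩
      rw [hfe, Finset.card_insert_of_notMem (by simp; omega), Finset.card_singleton]
    rw [Finset.sum_congr rfl hper, Finset.sum_const, smul_eq_mul, Nat.mul_comm]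
  rw [← hsum]
  exact Finset.sum_le_sum (fun x _ => hstep x)



lemma pointwise_bound (F : Bool → Bool → Bool → ℝ) (ε K : ℝ)
    (hε : 0 < ε) (hεK : ε ≤ K)
    (hF : ∀ u v w : Bool, ε ≤ F u v w ∧ F u v w ≤ K)
    (l m n : ℤ) (hl : 1 ≤ l) (η ζ : ℤ → Bool) :
    2 * ε * (gPair (l + 1) m n η ζ : ℝ) ≤
      omegaG F l (m - 1) (n + 1) η ζ
        + K * (3 * (l : ℝ) + 2) * (gPair l (m - 1) (n + 1) η ζ : ℝ) := by
  classical
  have hgζ : ∀ x : ℤ, (gPair l (m-1) (n+1) (flipAt η x) (flipAt ζ x) : ℝ)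
      - (gPair l (m-1) (n+1) η ζ : ℝ)
      = (crN (discrep η ζ) l (m-1) (n+1) x (-(discrep η ζ x)) : ℝ)
        - (deN (discrep η ζ) l (m-1) (n+1) x (-(discrep η ζ x)) : ℝ) := by
    intro x
    rw [gPair, gPair, runCount_eq _ _ _ _ hl, runCount_eq _ _ _ _ hl, discrep_flipAt_both]
    exact card_update _ _ _ _ _ _
  have hgL : ∀ x : ℤ, (gPair l (m-1) (n+1) (flipAt η x) ζ : ℝ)
      - (gPair l (m-1) (n+1) η ζ : ℝ)
      = (crN (discrep η ζ) l (m-1) (n+1) x (vL η ζ x) : ℝ)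
        - (deN (discrep η ζ) l (m-1) (n+1) x (vL η ζ x) : ℝ) := by
    intro x
    rw [gPair, gPair, runCount_eq _ _ _ _ hl, runCount_eq _ _ _ _ hl, discrep_flipAt_left]
    exact card_update _ _ _ _ _ _
  have hgR : ∀ x : ℤ, (gPair l (m-1) (n+1) η (flipAt ζ x) : ℝ)
      - (gPair l (m-1) (n+1) η ζ : ℝ)
      = (crN (discrep η ζ) l (m-1) (n+1) x (vR η ζ x) : ℝ)
        - (deN (discrep η ζ) l (m-1) (n+1) x (vR η ζ x) : ℝ) := by
    intro x
    rw [gPair, gPair, runCount_eq _ _ _ _ hl, runCount_eq _ _ _ _ hl, discrep_flipAt_right]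
    exact card_update _ _ _ _ _ _
  have hterm : ∀ x ∈ Finset.Icc (m - 1 - 1) (n + 1 + 1),
      ε * (crN (discrep η ζ) l (m-1) (n+1) x (-(discrep η ζ x)) : ℝ)
        - K * ((deN (discrep η ζ) l (m-1) (n+1) x (-(discrep η ζ x)) : ℝ)
          + (deN (discrep η ζ) l (m-1) (n+1) x (vL η ζ x) : ℝ)
          + (deN (discrep η ζ) l (m-1) (n+1) x (vR η ζ x) : ℝ))
      ≤ (min (rate F x η) (rate F x ζ)) *
          ((gPair l (m-1) (n+1) (flipAt η x) (flipAt ζ x) : ℝ) - (gPair l (m-1) (n+1) η ζ : ℝ)) +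
        (rate F x η - min (rate F x η) (rate F x ζ)) *
          ((gPair l (m-1) (n+1) (flipAt η x) ζ : ℝ) - (gPair l (m-1) (n+1) η ζ : ℝ)) +
        (rate F x ζ - min (rate F x η) (rate F x ζ)) *
          ((gPair l (m-1) (n+1) η (flipAt ζ x) : ℝ) - (gPair l (m-1) (n+1) η ζ : ℝ)) := by
    intro x _
    rw [hgζ x, hgL x, hgR x]
    have hA1 : ε ≤ rate F x η := (hF _ _ _).1
    have hA2 : rate F x η ≤ K := (hF _ _ _).2
    have hB1 : ε ≤ rate F x ζ := (hF _ _ _).1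
    have hB2 : rate F x ζ ≤ K := (hF _ _ _).2
    have hm1 : ε ≤ min (rate F x η) (rate F x ζ) := le_min hA1 hB1
    have hm2 : min (rate F x η) (rate F x ζ) ≤ K := le_trans (min_le_left _ _) hA2
    have hL1 : (0:ℝ) ≤ rate F x η - min (rate F x η) (rate F x ζ) := by
      have := min_le_left (rate F x η) (rate F x ζ); linarith
    have hL2 : rate F x η - min (rate F x η) (rate F x ζ) ≤ K := by linarith
    have hR1 : (0:ℝ) ≤ rate F x ζ - min (rate F x η) (rate F x ζ) := by
      have := min_le_right (rate F x η) (rate F x ζ); linarith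
    have hR2 : rate F x ζ - min (rate F x η) (rate F x ζ) ≤ K := by linarith
    set cC := (crN (discrep η ζ) l (m-1) (n+1) x (-(discrep η ζ x)) : ℝ)
    set dC := (deN (discrep η ζ) l (m-1) (n+1) x (-(discrep η ζ x)) : ℝ)
    set cL := (crN (discrep η ζ) l (m-1) (n+1) x (vL η ζ x) : ℝ)
    set dL := (deN (discrep η ζ) l (m-1) (n+1) x (vL η ζ x) : ℝ)
    set cR := (crN (discrep η ζ) l (m-1) (n+1) x (vR η ζ x) : ℝ)
    set dR := (deN (discrep η ζ) l (m-1) (n+1) x (vR η ζ x) : ℝ)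
    have hc1 : (0:ℝ) ≤ cC := Nat.cast_nonneg _
    have hc2 : (0:ℝ) ≤ dC := Nat.cast_nonneg _
    have hc3 : (0:ℝ) ≤ cL := Nat.cast_nonneg _
    have hc4 : (0:ℝ) ≤ dL := Nat.cast_nonneg _
    have hc5 : (0:ℝ) ≤ cR := Nat.cast_nonneg _
    have hc6 : (0:ℝ) ≤ dR := Nat.cast_nonneg _
    nlinarith [mul_le_mul_of_nonneg_right hm1 hc1, mul_le_mul_of_nonneg_right hm2 hc2,
      mul_nonneg hL1 hc3, mul_le_mul_of_nonneg_right hL2 hc4,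
      mul_nonneg hR1 hc5, mul_le_mul_of_nonneg_right hR2 hc6]
  have hsum : ε * (∑ x ∈ Finset.Icc (m - 1 - 1) (n + 1 + 1),
        (crN (discrep η ζ) l (m-1) (n+1) x (-(discrep η ζ x)) : ℝ))
      - K * (∑ x ∈ Finset.Icc (m - 1 - 1) (n + 1 + 1),
        ((deN (discrep η ζ) l (m-1) (n+1) x (-(discrep η ζ x)) : ℝ)
          + (deN (discrep η ζ) l (m-1) (n+1) x (vL η ζ x) : ℝ)
          + (deN (discrep η ζ) l (m-1) (n+1) x (vR η ζ x) : ℝ)))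
      ≤ omegaG F l (m - 1) (n + 1) η ζ := by
    rw [omegaG, Finset.mul_sum, Finset.mul_sum, ← Finset.sum_sub_distrib]
    exact Finset.sum_le_sum hterm
  have hcr : 2 * ((runF (discrep η ζ) (l + 1) m n).card : ℝ)
      ≤ ∑ x ∈ Finset.Icc (m - 1 - 1) (n + 1 + 1),
          (crN (discrep η ζ) l (m-1) (n+1) x (-(discrep η ζ x)) : ℝ) := by
    have h := create_sum_ge η ζ l m n hl
    calc 2 * ((runF (discrep η ζ) (l + 1) m n).card : ℝ)
        = ((2 * (runF (discrep η ζ) (l + 1) m n).card : ℕ) : ℝ) := by push_cast; ring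
      _ ≤ ((∑ x ∈ Finset.Icc (m - 1 - 1) (n + 1 + 1),
            crN (discrep η ζ) l (m-1) (n+1) x (-(discrep η ζ x)) : ℕ) : ℝ) := by
          exact_mod_cast Nat.cast_le.mpr h
      _ = _ := by push_cast; rfl
  have hdest : (∑ x ∈ Finset.Icc (m - 1 - 1) (n + 1 + 1),
        ((deN (discrep η ζ) l (m-1) (n+1) x (-(discrep η ζ x)) : ℝ)
          + (deN (discrep η ζ) l (m-1) (n+1) x (vL η ζ x) : ℝ)
          + (deN (discrep η ζ) l (m-1) (n+1) x (vR η ζ x) : ℝ)))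
      ≤ ((runF (discrep η ζ) l (m-1) (n+1)).card : ℝ) * (3 * (l:ℝ) + 2) := by
    have h := destroy_sum_le η ζ l (m-1) (n+1) hl
    have hc : ((∑ x ∈ Finset.Icc (m - 1 - 1) (n + 1 + 1),
        (deN (discrep η ζ) l (m-1) (n+1) x (-(discrep η ζ x))
          + deN (discrep η ζ) l (m-1) (n+1) x (vL η ζ x)
          + deN (discrep η ζ) l (m-1) (n+1) x (vR η ζ x)) : ℕ) : ℝ)
        ≤ (((runF (discrep η ζ) l (m-1) (n+1)).card * (3 * l.toNat + 2) : ℕ) : ℝ) :=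
      Nat.cast_le.mpr h
    have htn : ((l.toNat : ℕ) : ℝ) = (l : ℝ) := by
      rw [show ((l.toNat : ℕ) : ℝ) = ((l.toNat : ℤ) : ℝ) by push_cast; ring,
        Int.toNat_of_nonneg (by omega)]
    calc (∑ x ∈ Finset.Icc (m - 1 - 1) (n + 1 + 1),
        ((deN (discrep η ζ) l (m-1) (n+1) x (-(discrep η ζ x)) : ℝ)
          + (deN (discrep η ζ) l (m-1) (n+1) x (vL η ζ x) : ℝ)
          + (deN (discrep η ζ) l (m-1) (n+1) x (vR η ζ x) : ℝ)))
        = ((∑ x ∈ Finset.Icc (m - 1 - 1) (n + 1 + 1),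
          (deN (discrep η ζ) l (m-1) (n+1) x (-(discrep η ζ x))
            + deN (discrep η ζ) l (m-1) (n+1) x (vL η ζ x)
            + deN (discrep η ζ) l (m-1) (n+1) x (vR η ζ x)) : ℕ) : ℝ) := by
          push_cast; rfl
      _ ≤ (((runF (discrep η ζ) l (m-1) (n+1)).card * (3 * l.toNat + 2) : ℕ) : ℝ) := hc
      _ = ((runF (discrep η ζ) l (m-1) (n+1)).card : ℝ) * (3 * (l:ℝ) + 2) := by
          push_cast [htn]; ring
  have hg1 : (gPair (l + 1) m n η ζ : ℝ) = ((runF (discrep η ζ) (l + 1) m n).card : ℝ) := by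
    rw [gPair, runCount_eq _ _ _ _ (by omega : (1:ℤ) ≤ l + 1)]
  have hg2 : (gPair l (m - 1) (n + 1) η ζ : ℝ) = ((runF (discrep η ζ) l (m-1) (n+1)).card : ℝ) := by
    rw [gPair, runCount_eq _ _ _ _ hl]
  rw [hg1, hg2]
  have hKpos : (0:ℝ) < K := lt_of_lt_of_le hε hεK
  have s1 : ε * (2 * ((runF (discrep η ζ) (l + 1) m n).card : ℝ))
      ≤ ε * (∑ x ∈ Finset.Icc (m - 1 - 1) (n + 1 + 1),
          (crN (discrep η ζ) l (m-1) (n+1) x (-(discrep η ζ x)) : ℝ)) :=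
    mul_le_mul_of_nonneg_left hcr hε.le
  have s2 : K * (∑ x ∈ Finset.Icc (m - 1 - 1) (n + 1 + 1),
        ((deN (discrep η ζ) l (m-1) (n+1) x (-(discrep η ζ x)) : ℝ)
          + (deN (discrep η ζ) l (m-1) (n+1) x (vL η ζ x) : ℝ)
          + (deN (discrep η ζ) l (m-1) (n+1) x (vR η ζ x) : ℝ)))
      ≤ K * (((runF (discrep η ζ) l (m-1) (n+1)).card : ℝ) * (3 * (l:ℝ) + 2)) :=
    mul_le_mul_of_nonneg_left hdest hKpos.le
  nlinarith [hsum]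



lemma measurable_discrep_apply (f g : ((ℤ → Bool) × (ℤ → Bool)) → (ℤ → Bool))
    (hf : Measurable f) (hg : Measurable g) (y : ℤ) :
    Measurable fun p => discrep (f p) (g p) y := by
  have h1 : Measurable fun p => f p y := (measurable_pi_apply y).comp hf
  have h2 : Measurable fun p => g p y := (measurable_pi_apply y).comp hg
  have hb : Measurable fun b : Bool => (if b then (1:ℤ) else 0) := measurable_from_top
  unfold discrep
  exact (hb.comp h1).sub (hb.comp h2)

lemma measurableSet_isMaxRun (f g : ((ℤ → Bool) × (ℤ → Bool)) → (ℤ → Bool))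
    (hf : Measurable f) (hg : Measurable g) (l m n a s : ℤ) :
    MeasurableSet {p : (ℤ → Bool) × (ℤ → Bool) | IsMaxRun (discrep (f p) (g p)) l m n a s} := by
  have atom : ∀ (y c : ℤ),
      MeasurableSet {p : (ℤ → Bool) × (ℤ → Bool) | discrep (f p) (g p) y = c} :=
    fun y c => (measurable_discrep_apply f g hf hg y) (measurableSet_singleton c)
  have hset : {p : (ℤ → Bool) × (ℤ → Bool) | IsMaxRun (discrep (f p) (g p)) l m n a s}
      = ((⋂ i ∈ Finset.Icc (0:ℤ) (l-1),
            {p : (ℤ → Bool) × (ℤ → Bool) | discrep (f p) (g p) (a + i) = s})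
        ∩ ({p : (ℤ → Bool) × (ℤ → Bool) | discrep (f p) (g p) (a - 1) = s}ᶜ
        ∩ ({p : (ℤ → Bool) × (ℤ → Bool) | discrep (f p) (g p) (a + l) = s}ᶜ
        ∩ {_p : (ℤ → Bool) × (ℤ → Bool) | m ≤ a ∧ a + l - 1 ≤ n}))) := by
    ext p
    simp only [Set.mem_setOf_eq, Set.mem_inter_iff, Set.mem_iInter, Set.mem_compl_iff,
      Finset.mem_Icc, IsMaxRun]
    constructor
    · rintro ⟨h1, h2, h3, h4, h5⟩
      exact ⟨fun i hi => h1 i hi.1 hi.2, h2, h3, h4, h5⟩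
    · rintro ⟨h1, h2, h3, h4, h5⟩
      exact ⟨fun i hi1 hi2 => h1 i ⟨hi1, hi2⟩, h2, h3, h4, h5⟩
  rw [hset]
  exact (MeasurableSet.biInter (Set.to_countable _) fun i _ => atom _ _).inter
    ((atom _ _).compl.inter ((atom _ _).compl.inter (MeasurableSet.const _)))

lemma measurable_gPair (l m n : ℤ) (hl : 1 ≤ l)
    (f g : ((ℤ → Bool) × (ℤ → Bool)) → (ℤ → Bool))
    (hf : Measurable f) (hg : Measurable g) :
    Measurable fun p => (gPair l m n (f p) (g p) : ℝ) := by
  classical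
  have heq : ∀ p : (ℤ → Bool) × (ℤ → Bool), (gPair l m n (f p) (g p) : ℝ)
      = ∑ q ∈ (Finset.Icc m n ×ˢ ({1, -1} : Finset ℤ)),
          (if IsMaxRun (discrep (f p) (g p)) l m n q.1 q.2 then (1:ℝ) else 0) := by
    intro p
    rw [gPair, runCount_eq _ _ _ _ hl, runF,
      @Finset.card_filter _ _ (Classical.decPred _), Nat.cast_sum]
    exact Finset.sum_congr rfl fun q _ => by split_ifs <;> simp
  rw [show (fun p => (gPair l m n (f p) (g p) : ℝ)) = _ from funext heq]
  apply Finset.measurable_sum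
  intro q _
  exact Measurable.ite (measurableSet_isMaxRun f g hf hg l m n q.1 q.2)
    measurable_const measurable_const

lemma measurable_flipAt (x : ℤ) : Measurable fun η : ℤ → Bool => flipAt η x := by
  apply measurable_pi_lambda
  intro y
  by_cases h : y = x
  · subst h
    have he : (fun η : ℤ → Bool => flipAt η y y) = fun η => !η y := by
      funext η; simp [flipAt]
    rw [he]
    have hnot : Measurable fun b : Bool => !b := measurable_from_top
    exact hnot.comp (measurable_pi_apply y)
  · have he : (fun η : ℤ → Bool => flipAt η x y) = fun η => η y := by
      funext η; simp [flipAt, Function.update_of_ne h]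
    rw [he]
    exact measurable_pi_apply y

lemma measurable_rate (F : Bool → Bool → Bool → ℝ) (x : ℤ)
    (f : ((ℤ → Bool) × (ℤ → Bool)) → (ℤ → Bool)) (hf : Measurable f) :
    Measurable fun p => rate F x (f p) := by
  have h1 : Measurable fun p => ((f p (x-1), f p x, f p (x+1)) : Bool × Bool × Bool) :=
    Measurable.prodMk ((measurable_pi_apply (x-1)).comp hf)
      (Measurable.prodMk ((measurable_pi_apply x).comp hf)
        ((measurable_pi_apply (x+1)).comp hf))
  exact (measurable_of_countable (fun t : Bool × Bool × Bool => F t.1 t.2.1 t.2.2)).comp h1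

lemma measurable_omegaG (F : Bool → Bool → Bool → ℝ) (l m n : ℤ) (hl : 1 ≤ l) :
    Measurable fun p : (ℤ → Bool) × (ℤ → Bool) => omegaG F l m n p.1 p.2 := by
  unfold omegaG
  apply Finset.measurable_sum
  intro x _
  have mf1 : Measurable fun p : (ℤ → Bool) × (ℤ → Bool) => flipAt p.1 x :=
    (measurable_flipAt x).comp measurable_fst
  have mf2 : Measurable fun p : (ℤ → Bool) × (ℤ → Bool) => flipAt p.2 x :=
    (measurable_flipAt x).comp measurable_snd
  have g00 := measurable_gPair l m n hl _ _ measurable_fst measurable_snd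
  have gCC := measurable_gPair l m n hl _ _ mf1 mf2
  have gC0 := measurable_gPair l m n hl _ _ mf1 measurable_snd
  have g0C := measurable_gPair l m n hl _ _ measurable_fst mf2
  have r1 := measurable_rate F x _ measurable_fst
  have r2 := measurable_rate F x _ measurable_snd
  exact (((r1.min r2).mul (gCC.sub g00)).add
    ((r1.sub (r1.min r2)).mul (gC0.sub g00))).add
    ((r2.sub (r1.min r2)).mul (g0C.sub g00))

lemma gPair_le (l m n : ℤ) (hl : 1 ≤ l) (η ζ : ℤ → Bool) :
    (gPair l m n η ζ : ℝ) ≤ ((Finset.Icc m n ×ˢ ({1,-1} : Finset ℤ)).card : ℝ) := by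
  have h : gPair l m n η ζ ≤ (Finset.Icc m n ×ˢ ({1,-1} : Finset ℤ)).card := by
    rw [gPair, runCount_eq _ _ _ _ hl, runF]
    exact Finset.card_le_card (@Finset.filter_subset _ _ (Classical.decPred _) _)
  exact_mod_cast h

open MeasureTheory in
lemma integrable_gPair (ν : MeasureTheory.Measure ((ℤ → Bool) × (ℤ → Bool)))
    [IsProbabilityMeasure ν] (l m n : ℤ) (hl : 1 ≤ l) :
    Integrable (fun p => (gPair l m n p.1 p.2 : ℝ)) ν := by
  refine (integrable_const (((Finset.Icc m n ×ˢ ({1,-1} : Finset ℤ)).card : ℝ))).mono'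
    ((measurable_gPair l m n hl _ _ measurable_fst measurable_snd).aestronglyMeasurable)
    (Filter.Eventually.of_forall fun p => ?_)
  rw [Real.norm_eq_abs, abs_of_nonneg (Nat.cast_nonneg _)]
  exact gPair_le l m n hl _ _

lemma omegaG_bound (F : Bool → Bool → Bool → ℝ) (ε K : ℝ) (hε : 0 < ε) (hεK : ε ≤ K)
    (hF : ∀ u v w : Bool, ε ≤ F u v w ∧ F u v w ≤ K) (l m n : ℤ) (hl : 1 ≤ l)
    (η ζ : ℤ → Bool) :
    |omegaG F l m n η ζ| ≤ ((Finset.Icc (m-1) (n+1)).card : ℝ)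
      * (3 * K * ((Finset.Icc m n ×ˢ ({1,-1} : Finset ℤ)).card : ℝ)) := by
  set B := ((Finset.Icc m n ×ˢ ({1,-1} : Finset ℤ)).card : ℝ) with hB
  have hB0 : 0 ≤ B := Nat.cast_nonneg _
  have hK0 : (0:ℝ) ≤ K := le_trans hε.le hεK
  have hterm : ∀ x ∈ Finset.Icc (m-1) (n+1),
      |(min (rate F x η) (rate F x ζ)) *
          ((gPair l m n (flipAt η x) (flipAt ζ x) : ℝ) - (gPair l m n η ζ : ℝ)) +
        (rate F x η - min (rate F x η) (rate F x ζ)) *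
          ((gPair l m n (flipAt η x) ζ : ℝ) - (gPair l m n η ζ : ℝ)) +
        (rate F x ζ - min (rate F x η) (rate F x ζ)) *
          ((gPair l m n η (flipAt ζ x) : ℝ) - (gPair l m n η ζ : ℝ))|
      ≤ 3 * K * B := by
    intro x _
    have hA1 : ε ≤ rate F x η := (hF _ _ _).1
    have hA2 : rate F x η ≤ K := (hF _ _ _).2
    have hB1 : ε ≤ rate F x ζ := (hF _ _ _).1
    have hB2 : rate F x ζ ≤ K := (hF _ _ _).2
    have hm1 : ε ≤ min (rate F x η) (rate F x ζ) := le_min hA1 hB1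
    have hm2 : min (rate F x η) (rate F x ζ) ≤ K := le_trans (min_le_left _ _) hA2
    have hml := min_le_left (rate F x η) (rate F x ζ)
    have hmr := min_le_right (rate F x η) (rate F x ζ)
    have habs : ∀ u v : ℝ, 0 ≤ u → u ≤ B → 0 ≤ v → v ≤ B → |u - v| ≤ B :=
      fun u v h1 h2 h3 h4 => abs_le.mpr ⟨by linarith, by linarith⟩
    have hd1 : |(gPair l m n (flipAt η x) (flipAt ζ x) : ℝ) - (gPair l m n η ζ : ℝ)| ≤ B :=
      habs _ _ (Nat.cast_nonneg _) (gPair_le l m n hl _ _) (Nat.cast_nonneg _)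
        (gPair_le l m n hl _ _)
    have hd2 : |(gPair l m n (flipAt η x) ζ : ℝ) - (gPair l m n η ζ : ℝ)| ≤ B :=
      habs _ _ (Nat.cast_nonneg _) (gPair_le l m n hl _ _) (Nat.cast_nonneg _)
        (gPair_le l m n hl _ _)
    have hd3 : |(gPair l m n η (flipAt ζ x) : ℝ) - (gPair l m n η ζ : ℝ)| ≤ B :=
      habs _ _ (Nat.cast_nonneg _) (gPair_le l m n hl _ _) (Nat.cast_nonneg _)
        (gPair_le l m n hl _ _)
    have ha1 : |min (rate F x η) (rate F x ζ)| ≤ K := by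
      rw [abs_of_nonneg (by linarith)]; exact hm2
    have ha2 : |rate F x η - min (rate F x η) (rate F x ζ)| ≤ K := by
      rw [abs_of_nonneg (by linarith)]; linarith
    have ha3 : |rate F x ζ - min (rate F x η) (rate F x ζ)| ≤ K := by
      rw [abs_of_nonneg (by linarith)]; linarith
    refine le_trans (abs_add_three _ _ _) ?_
    rw [abs_mul, abs_mul, abs_mul]
    calc _ ≤ K * B + K * B + K * B :=
          add_le_add (add_le_add
            (mul_le_mul ha1 hd1 (abs_nonneg _) hK0)
            (mul_le_mul ha2 hd2 (abs_nonneg _) hK0))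
            (mul_le_mul ha3 hd3 (abs_nonneg _) hK0)
      _ = 3 * K * B := by ring
  calc |omegaG F l m n η ζ| ≤ ∑ x ∈ Finset.Icc (m-1) (n+1),
        |(min (rate F x η) (rate F x ζ)) *
            ((gPair l m n (flipAt η x) (flipAt ζ x) : ℝ) - (gPair l m n η ζ : ℝ)) +
          (rate F x η - min (rate F x η) (rate F x ζ)) *
            ((gPair l m n (flipAt η x) ζ : ℝ) - (gPair l m n η ζ : ℝ)) +
          (rate F x ζ - min (rate F x η) (rate F x ζ)) *
            ((gPair l m n η (flipAt ζ x) : ℝ) - (gPair l m n η ζ : ℝ))| := by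
        rw [omegaG]; exact Finset.abs_sum_le_sum_abs _ _
    _ ≤ ∑ _x ∈ Finset.Icc (m-1) (n+1), 3 * K * B := Finset.sum_le_sum hterm
    _ = ((Finset.Icc (m-1) (n+1)).card : ℝ) * (3 * K * B) := by
        rw [Finset.sum_const, nsmul_eq_mul]

open MeasureTheory in
lemma integrable_omegaG (ν : MeasureTheory.Measure ((ℤ → Bool) × (ℤ → Bool)))
    [IsProbabilityMeasure ν] (F : Bool → Bool → Bool → ℝ) (ε K : ℝ)
    (hε : 0 < ε) (hεK : ε ≤ K)
    (hF : ∀ u v w : Bool, ε ≤ F u v w ∧ F u v w ≤ K) (l m n : ℤ) (hl : 1 ≤ l) :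
    Integrable (fun p => omegaG F l m n p.1 p.2) ν := by
  refine (integrable_const (((Finset.Icc (m-1) (n+1)).card : ℝ)
      * (3 * K * ((Finset.Icc m n ×ˢ ({1,-1} : Finset ℤ)).card : ℝ)))).mono'
    ((measurable_omegaG F l m n hl).aestronglyMeasurable)
    (Filter.Eventually.of_forall fun p => ?_)
  rw [Real.norm_eq_abs]
  exact omegaG_bound F ε K hε hεK hF l m n hl p.1 p.2


end SupAux

open MeasureTheory in
theorem sup_integral_finite (F : Bool → Bool → Bool → ℝ) (ε K : ℝ)
    (hε : 0 < ε) (hεK : ε ≤ K)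
    (hF : ∀ u v w : Bool, ε ≤ F u v w ∧ F u v w ≤ K)
    (ν : Measure ((ℤ → Bool) × (ℤ → Bool))) [IsProbabilityMeasure ν]
    (l : ℤ) (hl : 1 ≤ l)
    (hinv : ∀ m n : ℤ, m ≤ n → ∫ p, omegaG F l m n p.1 p.2 ∂ν = 0)
    (C : ℝ)
    (hbdd : BddAbove {r : ℝ | ∃ m n : ℤ, m ≤ n ∧ r = ∫ p, (gPair l m n p.1 p.2 : ℝ) ∂ν})
    (hC : C = sSup {r : ℝ | ∃ m n : ℤ, m ≤ n ∧ r = ∫ p, (gPair l m n p.1 p.2 : ℝ) ∂ν}) :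
    BddAbove {r : ℝ | ∃ m n : ℤ, m ≤ n ∧
        r = ∫ p, (gPair (l + 1) m n p.1 p.2 : ℝ) ∂ν} ∧
      sSup {r : ℝ | ∃ m n : ℤ, m ≤ n ∧
          r = ∫ p, (gPair (l + 1) m n p.1 p.2 : ℝ) ∂ν} ≤
        (4 * K * (l : ℝ) + 2 * ε) * C / ε := by
  classical
  have hKpos : (0:ℝ) < K := lt_of_lt_of_le hε hεK
  have hl1 : (1:ℝ) ≤ (l:ℝ) := by exact_mod_cast hl
  have hC0 : 0 ≤ C := by
    have hmem : (∫ p, (gPair l 0 0 p.1 p.2 : ℝ) ∂ν)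
        ∈ {r : ℝ | ∃ m n : ℤ, m ≤ n ∧ r = ∫ p, (gPair l m n p.1 p.2 : ℝ) ∂ν} :=
      ⟨0, 0, le_refl 0, rfl⟩
    have h1 : 0 ≤ ∫ p, (gPair l 0 0 p.1 p.2 : ℝ) ∂ν :=
      integral_nonneg fun p => Nat.cast_nonneg _
    rw [hC]
    exact le_trans h1 (le_csSup hbdd hmem)
  have key : ∀ m n : ℤ, m ≤ n →
      (∫ p, (gPair (l + 1) m n p.1 p.2 : ℝ) ∂ν) ≤ (4 * K * (l:ℝ) + 2 * ε) * C / ε := by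
    intro m n hmn
    have hinv' : ∫ p, omegaG F l (m-1) (n+1) p.1 p.2 ∂ν = 0 := hinv (m-1) (n+1) (by omega)
    have hIo : Integrable (fun p => omegaG F l (m-1) (n+1) p.1 p.2) ν :=
      SupAux.integrable_omegaG ν F ε K hε hεK hF l (m-1) (n+1) hl
    have hIl : Integrable (fun p => (gPair l (m-1) (n+1) p.1 p.2 : ℝ)) ν :=
      SupAux.integrable_gPair ν l (m-1) (n+1) hl
    have hIl1 : Integrable (fun p => (gPair (l+1) m n p.1 p.2 : ℝ)) ν :=
      SupAux.integrable_gPair ν (l+1) m n (by omega)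
    have hmono : (∫ p, 2 * ε * (gPair (l+1) m n p.1 p.2 : ℝ) ∂ν)
        ≤ ∫ p, (omegaG F l (m-1) (n+1) p.1 p.2
            + K * (3 * (l:ℝ) + 2) * (gPair l (m-1) (n+1) p.1 p.2 : ℝ)) ∂ν :=
      integral_mono (hIl1.const_mul _) (hIo.add (hIl.const_mul _))
        (fun p => SupAux.pointwise_bound F ε K hε hεK hF l m n hl p.1 p.2)
    rw [integral_const_mul] at hmono
    rw [integral_add hIo (hIl.const_mul _), hinv', integral_const_mul, zero_add] at hmono
    have hle : (∫ p, (gPair l (m-1) (n+1) p.1 p.2 : ℝ) ∂ν) ≤ C := by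
      rw [hC]
      exact le_csSup hbdd ⟨m-1, n+1, by omega, rfl⟩
    have h2 : 2 * ε * (∫ p, (gPair (l+1) m n p.1 p.2 : ℝ) ∂ν) ≤ K * (3*(l:ℝ)+2) * C := by
      have h3 := mul_le_mul_of_nonneg_left hle
        (by positivity : (0:ℝ) ≤ K * (3*(l:ℝ)+2))
      linarith
    rw [le_div_iff₀ hε]
    have t1 : 0 ≤ K * C * ((l:ℝ) - 1) :=
      mul_nonneg (mul_nonneg hKpos.le hC0) (by linarith)
    have t2 : 0 ≤ K * C := mul_nonneg hKpos.le hC0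
    have t3 : 0 ≤ ε * C := mul_nonneg hε.le hC0
    nlinarith [h2, t1, t2, t3]
  constructor
  · exact ⟨(4 * K * (l:ℝ) + 2 * ε) * C / ε,
      fun r hr => by obtain ⟨m, n, hmn, rfl⟩ := hr; exact key m n hmn⟩
  · refine Real.sSup_le (fun r hr => ?_) ?_
    · obtain ⟨m, n, hmn, rfl⟩ := hr; exact key m n hmn
    · have h4 : 0 ≤ 4 * K * (l:ℝ) + 2 * ε := by nlinarith
      exact div_nonneg (mul_nonneg h4 hC0) hε.le
end
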